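/- arXiv:1501.06279 — 4 statements merged into one kernel-verified Lean document; each statement's English description precedes it below -/
import Mathlib

section
/- Let ψ(z) = Σ_{i=0}^{D-1} (2ω_c/(Dπ))·sinc((2ω_c/(Dπ))·(i - (D-1)/2))·z^{-i} be the truncated ideal low-pass filter, evaluated at z = e^{-2iωε} with ε = 1/D. Then as D → ∞, |ψ(z(ω))| converges to |Si(ω + ω_c) - Si(ω - ω_c)|/π, where Si(s) = ∫₀^s (sin θ)/θ dθ is the sine integral. -/
noncomputable def Si (s : ℝ) : ℝ := ∫ θ in (0:ℝ)..s, Real.sin θ / θ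

noncomputable def sinc (x : ℝ) : ℝ :=
  if x = 0 then 1 else Real.sin (Real.pi * x) / (Real.pi * x)

/-!
Up to the unimodular factor `exp (i ω (1 - 1/D))`, the filter sum is the midpoint Riemann sum,
with mesh `1/D`, of `∫_{-1/2}^{1/2} g(u) e^{2iωu} du`, where `g u = sin (2 ωc u) / (π u)`;
uniform continuity makes it converge. Since `g` is even, only `∫ g(u) cos(2ωu) du` survives, and
`2 sin a cos b = sin (a + b) + sin (a - b)` turns that into `(Si (ω + ωc) - Si (ω - ωc)) / π`.
-/

open Filter Topology Set intervalIntegral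
open scoped Real

section RiemannSum

variable {E : Type*} [NormedAddCommGroup E] [NormedSpace ℝ E] [CompleteSpace E]

theorem norm_integral_sub_smul_le {f : ℝ → E} {a b c C : ℝ} (hab : a ≤ b)
    (hf : IntervalIntegrable f MeasureTheory.volume a b)
    (hC : ∀ x ∈ Icc a b, ‖f x - f c‖ ≤ C) :
    ‖(∫ x in a..b, f x) - (b - a) • f c‖ ≤ C * (b - a) := by
  rw [← integral_const, ← integral_sub hf intervalIntegrable_const,
    ← abs_of_nonneg (sub_nonneg.2 hab)]
  refine norm_integral_le_of_norm_le_const fun x hx => hC x ?_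
  rw [uIoc_of_le hab] at hx
  exact Ioc_subset_Icc_self hx

theorem dist_smul_sum_integral_le {f : ℝ → E} (hf : ContinuousOn f (Icc 0 1))
    {θ : ℝ} (hθ : θ ∈ Icc (0 : ℝ) 1) {D : ℕ} (hD : D ≠ 0) {η : ℝ}
    (hη : ∀ x ∈ Icc (0 : ℝ) 1, ∀ y ∈ Icc (0 : ℝ) 1,
      dist x y ≤ (D : ℝ)⁻¹ → dist (f x) (f y) ≤ η) :
    dist ((D : ℝ)⁻¹ • ∑ i ∈ Finset.range D, f ((i + θ) / D))
      (∫ x in (0 : ℝ)..1, f x) ≤ η := by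
  have hD0 : (0 : ℝ) < D := by positivity
  set x : ℕ → ℝ := fun k => k / D
  have hcell : ∀ i < D, Icc (x i) (x (i + 1)) ⊆ Icc 0 1 := by
    intro i hi
    apply Icc_subset_Icc (by positivity)
    rw [div_le_one hD0]
    exact_mod_cast hi
  have hlen : ∀ i, x (i + 1) - x i = (D : ℝ)⁻¹ := by
    intro i; simp only [x]; push_cast; field_simp; ring
  have hsum :
      ∫ y in (0 : ℝ)..1, f y = ∑ i ∈ Finset.range D, ∫ y in x i..x (i + 1), f y := by
    rw [sum_integral_adjacent_intervals]
    · simp [x, hD0.ne']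
    · intro i hi
      exact (hf.mono (hcell i hi)).intervalIntegrable_of_Icc (by simp [x]; gcongr; linarith)
  have hcell_err : ∀ i ∈ Finset.range D,
      ‖(∫ y in x i..x (i + 1), f y) - (x (i + 1) - x i) • f ((i + θ) / D)‖ ≤
        η * (D : ℝ)⁻¹ := by
    intro i hi
    rw [Finset.mem_range] at hi
    have hc : (i + θ) / D ∈ Icc (x i) (x (i + 1)) := by
      simp only [x, Nat.cast_add, Nat.cast_one]
      constructor <;> gcongr <;> linarith [hθ.1, hθ.2]
    have hle : x i ≤ x (i + 1) := by linarith [hlen i, inv_pos.2 hD0]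
    rw [← hlen i]
    refine norm_integral_sub_smul_le hle ((hf.mono (hcell i hi)).intervalIntegrable_of_Icc hle)
      fun y hy => ?_
    rw [← dist_eq_norm]
    refine hη y (hcell i hi hy) _ (hcell i hi hc) ?_
    rw [Real.dist_eq, abs_le]
    constructor <;> linarith [hy.1, hy.2, hc.1, hc.2, hlen i]
  calc dist ((D : ℝ)⁻¹ • ∑ i ∈ Finset.range D, f ((i + θ) / D)) (∫ y in (0 : ℝ)..1, f y)
    _ = ‖∑ i ∈ Finset.range D,
          ((∫ y in x i..x (i + 1), f y) - (x (i + 1) - x i) • f ((i + θ) / D))‖ := by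
        rw [dist_comm, dist_eq_norm, hsum, Finset.sum_sub_distrib, Finset.smul_sum]
        simp only [hlen]
    _ ≤ ∑ _i ∈ Finset.range D, η * (D : ℝ)⁻¹ := norm_sum_le_of_le _ hcell_err
    _ = η := by rw [Finset.sum_const, Finset.card_range, nsmul_eq_mul]; field_simp

theorem tendsto_smul_sum_integral_of_continuousOn {f : ℝ → E} (hf : ContinuousOn f (Icc 0 1))
    {θ : ℝ} (hθ : θ ∈ Icc (0 : ℝ) 1) :
    Tendsto (fun D : ℕ => (D : ℝ)⁻¹ • ∑ i ∈ Finset.range D, f ((i + θ) / D)) atTop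
      (𝓝 (∫ x in (0 : ℝ)..1, f x)) := by
  rw [Metric.tendsto_atTop]
  intro ε hε
  obtain ⟨δ, hδ, hfδ⟩ := Metric.uniformContinuousOn_iff.1
    (isCompact_Icc.uniformContinuousOn_of_continuous hf) (ε / 2) (half_pos hε)
  obtain ⟨N, hN⟩ := exists_nat_one_div_lt hδ
  refine ⟨N + 1, fun D hD => ?_⟩
  have hmesh : (D : ℝ)⁻¹ < δ := by
    refine lt_of_le_of_lt ?_ hN
    rw [one_div]
    gcongr
    exact_mod_cast hD
  refine (dist_smul_sum_integral_le hf hθ (by omega) fun x hx y hy hxy => ?_).trans_lt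
    (half_lt_self hε)
  exact (hfδ x hx y hy (hxy.trans_lt hmesh)).le

end RiemannSum

theorem integral_neg_eq_zero_of_odd {E : Type*} [NormedAddCommGroup E] [NormedSpace ℝ E]
    {f : ℝ → E} (hf : ∀ x, f (-x) = -f x) (a : ℝ) : ∫ x in -a..a, f x = 0 := by
  have h := integral_comp_neg (a := -a) (b := a) f
  simp only [hf, intervalIntegral.integral_neg, neg_neg] at h
  rwa [neg_eq_iff_add_eq_zero, ← two_smul ℝ, smul_eq_zero, or_iff_right two_ne_zero] at h

theorem sinc_eq_real_sinc_pi_mul (x : ℝ) : sinc x = Real.sinc (π * x) := by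
  simp [sinc, Real.sinc, Real.pi_ne_zero]

theorem Si_eq_integral_sinc (s : ℝ) : Si s = ∫ θ in (0 : ℝ)..s, Real.sinc θ := by
  refine integral_congr_ae ?_
  filter_upwards [MeasureTheory.Measure.ae_ne MeasureTheory.volume 0] with θ hθ _
  rw [Real.sinc_of_ne_zero hθ]

theorem Si_neg (s : ℝ) : Si (-s) = -Si s := by
  simp only [Si_eq_integral_sinc]
  rw [← neg_zero, ← integral_comp_neg, integral_symm]
  simp [Real.sinc_neg]

theorem integral_sinc_neg_self (s : ℝ) : ∫ θ in -s..s, Real.sinc θ = 2 * Si s := by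
  rw [← integral_add_adjacent_intervals (b := 0) (Real.continuous_sinc.intervalIntegrable _ _)
    (Real.continuous_sinc.intervalIntegrable _ _), integral_symm, ← Si_eq_integral_sinc,
    ← Si_eq_integral_sinc, Si_neg]
  ring

theorem integral_mul_sinc_two_mul (a : ℝ) :
    ∫ u in -(1 / 2 : ℝ)..1 / 2, a * Real.sinc (2 * a * u) = Si a := by
  rcases eq_or_ne a 0 with rfl | ha
  · simp [Si]
  rw [integral_const_mul,
    integral_comp_mul_left (fun θ => Real.sinc θ) (mul_ne_zero two_ne_zero ha),
    show 2 * a * (-(1 / 2)) = -a by ring, show 2 * a * (1 / 2) = a by ring,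
    integral_sinc_neg_self, smul_eq_mul]
  field_simp

theorem mul_sinc_two_mul {u : ℝ} (hu : u ≠ 0) (a : ℝ) :
    a * Real.sinc (2 * a * u) = Real.sin (2 * a * u) / (2 * u) := by
  rcases eq_or_ne a 0 with rfl | ha
  · simp
  rw [Real.sinc_of_ne_zero (by positivity)]
  field_simp

theorem two_mul_sinc_mul_cos (c ω u : ℝ) :
    2 * c * Real.sinc (2 * c * u) * Real.cos (2 * ω * u) =
      (c + ω) * Real.sinc (2 * (c + ω) * u) + (c - ω) * Real.sinc (2 * (c - ω) * u) := by
  rcases eq_or_ne u 0 with rfl | hu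
  · simp only [mul_zero, Real.sinc_zero, Real.cos_zero]
    ring
  rw [mul_assoc 2, mul_sinc_two_mul hu, mul_sinc_two_mul hu, mul_sinc_two_mul hu,
    mul_add, mul_sub, add_mul, sub_mul, Real.sin_add, Real.sin_sub]
  ring

theorem integral_two_mul_sinc_mul_cos (c ω : ℝ) :
    ∫ u in -(1 / 2 : ℝ)..1 / 2, 2 * c * Real.sinc (2 * c * u) * Real.cos (2 * ω * u) =
      Si (ω + c) - Si (ω - c) := by
  simp_rw [two_mul_sinc_mul_cos]
  rw [integral_add ((by fun_prop : Continuous _).intervalIntegrable _ _)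
    ((by fun_prop : Continuous _).intervalIntegrable _ _), integral_mul_sinc_two_mul,
    integral_mul_sinc_two_mul, ← neg_sub ω, Si_neg, add_comm c]
  ring

noncomputable def idealLowpass (ωc u : ℝ) : ℝ := 2 * ωc / π * sinc (2 * ωc / π * u)

theorem idealLowpass_eq (ωc u : ℝ) :
    idealLowpass ωc u = 2 * ωc * Real.sinc (2 * ωc * u) / π := by
  rw [idealLowpass, sinc_eq_real_sinc_pi_mul]
  field_simp

theorem continuous_idealLowpass (ωc : ℝ) : Continuous (idealLowpass ωc) := by
  simp_rw [funext (idealLowpass_eq ωc)]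
  fun_prop

theorem idealLowpass_neg (ωc u : ℝ) : idealLowpass ωc (-u) = idealLowpass ωc u := by
  simp [idealLowpass_eq, Real.sinc_neg]

theorem integral_idealLowpass_mul_exp (ωc ω : ℝ) :
    ∫ u in -(1 / 2 : ℝ)..1 / 2,
        (idealLowpass ωc u : ℂ) * Complex.exp (2 * Complex.I * ω * u) =
      ((Si (ω + ωc) - Si (ω - ωc)) / π : ℝ) := by
  have hsplit : ∀ u : ℝ, (idealLowpass ωc u : ℂ) * Complex.exp (2 * Complex.I * ω * u) =
      ((idealLowpass ωc u * Real.cos (2 * ω * u) : ℝ) : ℂ) +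
        ((idealLowpass ωc u * Real.sin (2 * ω * u) : ℝ) : ℂ) * Complex.I := by
    intro u
    rw [show 2 * Complex.I * ω * u = ((2 * ω * u : ℝ) : ℂ) * Complex.I by push_cast; ring,
      Complex.exp_mul_I]
    push_cast
    ring
  have hodd : ∫ u in -(1 / 2 : ℝ)..1 / 2, idealLowpass ωc u * Real.sin (2 * ω * u) = 0 :=
    integral_neg_eq_zero_of_odd (fun u => by simp [idealLowpass_neg]) _
  have hg := continuous_idealLowpass ωc
  simp_rw [hsplit]
  rw [integral_add ((by fun_prop : Continuous _).intervalIntegrable _ _)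
    ((by fun_prop : Continuous _).intervalIntegrable _ _), integral_mul_const,
    intervalIntegral.integral_ofReal, intervalIntegral.integral_ofReal, hodd,
    ← integral_two_mul_sinc_mul_cos, ← integral_div]
  simp only [idealLowpass_eq, Complex.ofReal_zero, zero_mul, add_zero]
  congr 2; ext u; ring

theorem lowpass_summand_eq (ωc ω : ℝ) {D : ℕ} (hD : D ≠ 0) (i : ℕ) :
    ((2 * ωc / (D * Real.pi)) * sinc ((2 * ωc / (D * Real.pi)) * (i - (D - 1) / 2)) : ℂ) *
        Complex.exp (-2 * Complex.I * ω * (1 / (D:ℝ))) ^ (-(i:ℤ)) =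
      Complex.exp (↑(ω * (1 - 1 / D)) * Complex.I) *
        ((D : ℝ)⁻¹ • ((idealLowpass ωc ((i + 1 / 2) / D - 1 / 2) : ℂ) *
          Complex.exp (2 * Complex.I * ω * ↑((i + 1 / 2) / D - 1 / 2 : ℝ)))) := by
  have harg :
      (2 * ωc / (D * π)) * (i - (D - 1) / 2) = 2 * ωc / π * ((i + 1 / 2) / D - 1 / 2) := by
    field_simp; ring
  have hexp : Complex.exp (-2 * Complex.I * ω * (1 / (D:ℝ))) ^ (-(i:ℤ)) =
      Complex.exp (↑(ω * (1 - 1 / D)) * Complex.I) *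
        Complex.exp (2 * Complex.I * ω * ↑((i + 1 / 2) / D - 1 / 2 : ℝ)) := by
    rw [← Complex.exp_int_mul, ← Complex.exp_add]
    congr 1
    push_cast
    field_simp
    ring
  rw [harg, hexp, idealLowpass, Complex.real_smul]
  push_cast
  ring

open Filter in
theorem lowpass_filter_limit_general (ωc : ℝ) (ω : ℝ) :
    Tendsto (fun D : ℕ =>
        ‖∑ i ∈ Finset.range D,
            ((2 * ωc / (D * Real.pi)) *
              sinc ((2 * ωc / (D * Real.pi)) * (i - (D - 1) / 2)) : ℂ) *
            Complex.exp (-2 * Complex.I * ω * (1 / (D:ℝ))) ^ (-(i:ℤ))‖)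
      atTop
      (nhds (|Si (ω + ωc) - Si (ω - ωc)| / Real.pi)) := by
  set F : ℝ → ℂ := fun t =>
    (idealLowpass ωc (t - 1 / 2) : ℂ) * Complex.exp (2 * Complex.I * ω * ↑(t - 1 / 2))
  have hF : Continuous F := by
    have := continuous_idealLowpass ωc
    fun_prop
  have hlimit : ‖∫ t in (0 : ℝ)..1, F t‖ = |Si (ω + ωc) - Si (ω - ωc)| / π := by
    rw [integral_comp_sub_right (fun u : ℝ =>
        (idealLowpass ωc u : ℂ) * Complex.exp (2 * Complex.I * ω * u)) (1 / 2)]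
    norm_num only [integral_idealLowpass_mul_exp, Complex.norm_real, Real.norm_eq_abs, abs_div,
      abs_of_pos Real.pi_pos]
  have hsum := (tendsto_smul_sum_integral_of_continuousOn hF.continuousOn
    (θ := 1 / 2) ⟨by norm_num, by norm_num⟩).norm
  rw [hlimit] at hsum
  refine hsum.congr' ?_
  filter_upwards [eventually_ne_atTop 0] with D hD
  simp_rw [lowpass_summand_eq ωc ω hD, ← Finset.mul_sum, ← Finset.smul_sum, norm_mul,
    Complex.norm_exp_ofReal_mul_I, one_mul]
  rfl

open Filter in
theorem lowpass_filter_limit (ωc : ℝ) (hωc : 0 < ωc) (ω : ℝ) :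
    Tendsto (fun D : ℕ =>
        ‖∑ i ∈ Finset.range D,
            ((2 * ωc / (D * Real.pi)) *
              sinc ((2 * ωc / (D * Real.pi)) * (i - (D - 1) / 2)) : ℂ) *
            Complex.exp (-2 * Complex.I * ω * (1 / (D:ℝ))) ^ (-(i:ℤ))‖)
      atTop
      (nhds (|Si (ω + ωc) - Si (ω - ωc)| / Real.pi)) :=
  lowpass_filter_limit_general ωc ω
end

section
/- In the setting of the discrete Zakharov–Shabat recursion generating polynomials a(z) = Σ_{i=0}^{D-1} a_i z^{-i} and b(z) = Σ_{i=0}^{D-1} b_i z^{-i} from samples Q[1],…,Q[D], the last sample satisfies Q[D] = -conj(b_0)/conj(a_0), provided a_0 ≠ 0. -/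
/-- Discrete Zakharov–Shabat recursion (half-powers of `z` cancelled against the
initial condition `z^{-D/2}·(1,0)ᵀ`). -/
noncomputable def zsPhi (Q : ℕ → ℂ) (z : ℂ) : ℕ → Fin 2 → ℂ
  | 0 => ![1, 0]
  | n + 1 => ((Real.sqrt (1 + ‖Q (n + 1)‖^2) : ℝ) : ℂ)⁻¹ •
      Matrix.mulVec !![1, z⁻¹ * Q (n + 1); -(starRingEnd ℂ) (Q (n + 1)), z⁻¹] (zsPhi Q z n)

/-- Polynomial versions (in `w = z⁻¹`) of the two components. -/
noncomputable def zsP (Q : ℕ → ℂ) : ℕ → Polynomial ℂ × Polynomial ℂ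
  | 0 => (1, 0)
  | n + 1 =>
      (Polynomial.C (((Real.sqrt (1 + ‖Q (n + 1)‖^2) : ℝ) : ℂ)⁻¹) *
        ((zsP Q n).1 + Polynomial.C (Q (n + 1)) * Polynomial.X * (zsP Q n).2),
       Polynomial.C (((Real.sqrt (1 + ‖Q (n + 1)‖^2) : ℝ) : ℂ)⁻¹) *
        (-Polynomial.C ((starRingEnd ℂ) (Q (n + 1))) * (zsP Q n).1 + Polynomial.X * (zsP Q n).2))

noncomputable abbrev zsP0 (Q : ℕ → ℂ) (n : ℕ) : Polynomial ℂ := (zsP Q n).1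
noncomputable abbrev zsP1 (Q : ℕ → ℂ) (n : ℕ) : Polynomial ℂ := (zsP Q n).2

lemma zsPhi_eq_eval (Q : ℕ → ℂ) (z : ℂ) (n : ℕ) :
    zsPhi Q z n 0 = (zsP0 Q n).eval z⁻¹ ∧ zsPhi Q z n 1 = (zsP1 Q n).eval z⁻¹ := by
  induction n with
  | zero => simp [zsPhi, zsP0, zsP1, zsP]
  | succ n ih =>
    obtain ⟨h0, h1⟩ := ih
    constructor <;>
    · simp only [zsPhi, zsP0, zsP1, zsP, Matrix.mulVec, dotProduct, Fin.sum_univ_two,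
        Matrix.of_apply, Matrix.cons_val', Matrix.cons_val_zero, Matrix.cons_val_one, Matrix.head_cons,
        Matrix.empty_val', Matrix.cons_val_fin_one, Matrix.vecHead, Matrix.vecTail, Pi.smul_apply, smul_eq_mul, h0, h1,
        Polynomial.eval_mul, Polynomial.eval_add, Polynomial.eval_neg, Polynomial.eval_C,
        Polynomial.eval_X, neg_mul]
      try ring

theorem last_sample_recovery (D : ℕ) (hD : 0 < D) (Q : ℕ → ℂ) (a b : ℕ → ℂ)
    (ha : ∀ z : ℂ, z ≠ 0 → ∑ i ∈ Finset.range D, a i * z ^ (-(i:ℤ)) = zsPhi Q z D 0)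
    (hb : ∀ z : ℂ, z ≠ 0 → ∑ i ∈ Finset.range D, b i * z ^ (-(i:ℤ)) = zsPhi Q z D 1)
    (ha0 : a 0 ≠ 0) :
    Q D = -(starRingEnd ℂ) (b 0) / (starRingEnd ℂ) (a 0) := by
  -- Turn the hypotheses into polynomial identities.
  have key : ∀ (c : ℕ → ℂ) (P : Polynomial ℂ),
      (∀ z : ℂ, z ≠ 0 → ∑ i ∈ Finset.range D, c i * z ^ (-(i:ℤ)) = P.eval z⁻¹) →
      c 0 = P.eval 0 := by
    intro c P h
    set A : Polynomial ℂ := ∑ i ∈ Finset.range D, Polynomial.C (c i) * Polynomial.X ^ i with hA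
    have hAeval : ∀ w : ℂ, A.eval w = ∑ i ∈ Finset.range D, c i * w ^ i := by
      intro w; simp [hA, Polynomial.eval_finset_sum]
    have heq : A = P := by
      have : ∀ w : ℂ, w ≠ 0 → A.eval w = P.eval w := by
        intro w hw
        have := h w⁻¹ (inv_ne_zero hw)
        simp only [inv_inv, zpow_neg, zpow_natCast, ← inv_pow] at this
        rw [hAeval, this]
      have hsub : ({(0:ℂ)}ᶜ : Set ℂ) ⊆ {x | (A - P).IsRoot x} := by
        intro w hw
        simp only [Set.mem_compl_iff, Set.mem_singleton_iff] at hw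
        simp [Polynomial.IsRoot, Polynomial.eval_sub, sub_eq_zero, this w hw]
      have hinf : ({(0:ℂ)}ᶜ : Set ℂ).Infinite :=
        Set.Finite.infinite_compl (Set.finite_singleton 0)
      have := Polynomial.eq_zero_of_infinite_isRoot (A - P) (hinf.mono hsub)
      exact sub_eq_zero.mp this
    have : A.eval 0 = c 0 := by
      rw [hAeval]
      rw [Finset.sum_eq_single 0]
      · simp
      · intro i _ hi; simp [pow_eq_zero_iff, hi]
      · intro h'; exact absurd (Finset.mem_range.mpr hD) h'
    rw [← this, heq]
  have haP : a 0 = (zsP0 Q D).eval 0 :=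
    key a _ (fun z hz => (ha z hz).trans (zsPhi_eq_eval Q z D).1)
  have hbP : b 0 = (zsP1 Q D).eval 0 :=
    key b _ (fun z hz => (hb z hz).trans (zsPhi_eq_eval Q z D).2)
  obtain ⟨n, rfl⟩ : ∃ n, D = n + 1 := ⟨D - 1, (Nat.succ_pred_eq_of_pos hD).symm⟩
  have hrel : b 0 = -(starRingEnd ℂ) (Q (n + 1)) * a 0 := by
    rw [haP, hbP]
    simp only [zsP0, zsP1, zsP, Polynomial.eval_mul, Polynomial.eval_add, Polynomial.eval_neg,
      Polynomial.eval_C, Polynomial.eval_X, neg_mul]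
    ring
  have hca : (starRingEnd ℂ) (a 0) ≠ 0 := by
    simpa using ha0
  rw [hrel, map_mul, map_neg, Complex.conj_conj, neg_mul, neg_neg, mul_div_assoc,
    div_self hca, mul_one]
end

section
/- Let T_n(z) = (z^{-1/2}/√(1+|Q[n]|²))·[[1, -Q[n]],[z·conj(Q[n]), z]] and T_{D→m}(z) = T_{m+1}(z)·…·T_D(z). Write a(z) = a^L(z) + z^{-D/2}·a^U(z) and b(z) = b^L(z) + z^{-D/2}·b^U(z) where a^L, b^L collect coefficients of z⁰,…,z^{-(D/2-1)}. Then for m > D/2, the entries of z^{-D/2}·T_{D→m}(z)·(a^U, b^U)ᵀ, viewed as Laurent series in z^{-1/2}, contain no terms of order z^{-j} for j ≤ (D-m)/2; hence the top coefficients of (a_{D-m}, b_{D-m}) = T_{D→m}·(a,b)ᵀ depend only on a^L, b^L. -/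
/-- `z^{1/2}·T_n(z)` with `z = w²`: the inverse-scattering step matrix without the
half-power of `z`, evaluated at `z = w²`. -/
noncomputable def invStep (Q : ℕ → ℂ) (n : ℕ) (w : ℂ) : Matrix (Fin 2) (Fin 2) ℂ :=
  ((Real.sqrt (1 + ‖Q n‖^2) : ℝ) : ℂ)⁻¹ •
    !![1, -Q n; w^2 * (starRingEnd ℂ) (Q n), w^2]

open Filter Asymptotics Matrix

noncomputable def lF : Filter ℂ := Filter.comap norm Filter.atTop

lemma lF_norm_tendsto : Tendsto (norm : ℂ → ℝ) lF atTop := tendsto_comap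

lemma lF_one_le : ∀ᶠ w : ℂ in lF, 1 ≤ ‖w‖ :=
  lF_norm_tendsto.eventually (eventually_ge_atTop 1)

lemma zpowBigO {j k : ℤ} (h : j ≤ k) :
    (fun w : ℂ => w ^ j) =O[lF] (fun w => ‖w‖ ^ k) := by
  apply IsBigO.of_bound 1
  filter_upwards [lF_one_le] with w hw
  rw [norm_zpow, one_mul, Real.norm_eq_abs, abs_of_nonneg (zpow_nonneg (by linarith) _)]
  exact zpow_le_zpow_right₀ hw h

lemma constBigO (c : ℂ) {k : ℤ} (hk : 0 ≤ k) :
    (fun _ : ℂ => c) =O[lF] (fun w => ‖w‖ ^ k) := by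
  apply IsBigO.of_bound ‖c‖
  filter_upwards [lF_one_le] with w hw
  have h1 : (1:ℝ) ≤ ‖w‖ ^ k := by
    calc (1:ℝ) = ‖w‖ ^ (0:ℤ) := by simp
    _ ≤ ‖w‖ ^ k := zpow_le_zpow_right₀ hw hk
  rw [Real.norm_eq_abs, abs_of_nonneg (by linarith)]
  nlinarith [norm_nonneg c]

lemma zpow_mul_ev (j k : ℤ) :
    (fun w : ℂ => ‖w‖ ^ j * ‖w‖ ^ k) =ᶠ[lF] (fun w => ‖w‖ ^ (j + k)) := by
  filter_upwards [lF_one_le] with w hw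
  rw [← zpow_add₀ (by positivity : ‖w‖ ≠ 0)]

lemma bigO_mul {f h : ℂ → ℂ} {j k : ℤ} (hf : f =O[lF] fun w => ‖w‖ ^ j)
    (hh : h =O[lF] fun w => ‖w‖ ^ k) :
    (fun w => f w * h w) =O[lF] fun w => ‖w‖ ^ (j + k) :=
  (hf.mul hh).congr' EventuallyEq.rfl (zpow_mul_ev j k)

lemma invStep_bigO (Q : ℕ → ℂ) (n : ℕ) (i j : Fin 2) :
    (fun w => invStep Q n w i j) =O[lF] (fun w => ‖w‖ ^ (2:ℤ)) := by
  have hsq : (fun w : ℂ => w ^ 2) =O[lF] (fun w => ‖w‖ ^ (2:ℤ)) := by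
    have := zpowBigO (le_refl (2:ℤ))
    simpa using this
  fin_cases i <;> fin_cases j <;>
    simp only [invStep, Matrix.smul_apply, smul_eq_mul, Fin.zero_eta, Fin.mk_one,
      Matrix.cons_val', Matrix.cons_val_zero, Matrix.cons_val_one, Matrix.head_cons,
      Matrix.empty_val', Matrix.cons_val_fin_one, Matrix.head_fin_const, Fin.isValue,
      Matrix.of_apply, Matrix.cons_val_fin_one]
  · exact constBigO _ (by norm_num : (0:ℤ) ≤ 2)
  · exact constBigO _ (by norm_num : (0:ℤ) ≤ 2)
  · have he : (fun w : ℂ => (((Real.sqrt (1 + ‖Q n‖^2) : ℝ) : ℂ))⁻¹ * (w ^ 2 * (starRingEnd ℂ) (Q n)))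
        = fun w : ℂ => ((((Real.sqrt (1 + ‖Q n‖^2) : ℝ) : ℂ))⁻¹ * (starRingEnd ℂ) (Q n)) * w ^ 2 := by
      funext w; ring
    rw [he]
    exact hsq.const_mul_left _
  · exact hsq.const_mul_left _

lemma mulVec_prod_bigO (Q : ℕ → ℂ) :
    ∀ (ns : List ℕ) (v : ℂ → Fin 2 → ℂ),
      (∀ i, (fun w => v w i) =O[lF] (fun w => ‖w‖ ^ (0:ℤ))) →
      ∀ i, (fun w => (((ns.map (fun n => invStep Q n w)).prod) *ᵥ (v w)) i)
        =O[lF] fun w => ‖w‖ ^ ((2 * ns.length : ℕ) : ℤ)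
  | [], v, hv, i => by simpa using hv i
  | n :: ns, v, hv, i => by
    have ih := mulVec_prod_bigO Q ns v hv
    have key : (fun w => (((( n :: ns).map (fun n => invStep Q n w)).prod) *ᵥ (v w)) i)
        = fun w => invStep Q n w i 0 * (((ns.map (fun n => invStep Q n w)).prod) *ᵥ (v w)) 0
          + invStep Q n w i 1 * (((ns.map (fun n => invStep Q n w)).prod) *ᵥ (v w)) 1 := by
      funext w
      rw [List.map_cons, List.prod_cons, ← Matrix.mulVec_mulVec]
      simp [Matrix.mulVec, dotProduct, Fin.sum_univ_two, Matrix.vecHead, Matrix.vecTail]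
    rw [key]
    have h0 := bigO_mul (invStep_bigO Q n i 0) (ih 0)
    have h1 := bigO_mul (invStep_bigO Q n i 1) (ih 1)
    have hadd := h0.add h1
    have : ((2 * (n :: ns).length : ℕ) : ℤ) = 2 + ((2 * ns.length : ℕ) : ℤ) := by
      simp [List.length_cons]; ring
    rw [this]
    exact hadd

lemma sum_bigO (c : ℕ → ℂ) (N : ℕ) :
    (fun w : ℂ => ∑ i ∈ Finset.range N, c i * (w^2) ^ (-(i:ℤ)))
      =O[lF] (fun w => ‖w‖ ^ (0:ℤ)) := by
  have hfun : (fun w : ℂ => ∑ i ∈ Finset.range N, c i * (w^2) ^ (-(i:ℤ)))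
      = ∑ i ∈ Finset.range N, (fun w : ℂ => c i * (w^2) ^ (-(i:ℤ))) := by
    ext w; simp [Finset.sum_apply]
  rw [hfun]
  apply IsBigO.sum
  intro i _
  apply IsBigO.of_bound ‖c i‖
  filter_upwards [lF_one_le] with w hw
  rw [norm_mul, norm_zpow, norm_pow]
  simp only [zpow_zero, norm_one, mul_one]
  have h1 : (1:ℝ) ≤ ‖w‖^2 := by nlinarith
  have h2 : (‖w‖^2) ^ (-(i:ℤ)) ≤ 1 := zpow_le_one_of_nonpos₀ h1 (by omega)
  have h3 : (0:ℝ) ≤ (‖w‖^2) ^ (-(i:ℤ)) := zpow_nonneg (by positivity) _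
  nlinarith [norm_nonneg (c i)]

open Filter in
/-- For `m > D/2`, the entries of `z^{-D/2}·T_{D→m}(z)·(a^U, b^U)ᵀ` (expressed in terms
of `w = z^{1/2}`, so that `T_{D→m}(w²) = w^{-(D-m)}·invStep Q (m+1) w ⋯ invStep Q D w`)
contain no Laurent terms of order `z^{-j}` with `j ≤ (D-m)/2`: multiplying them by
`z^{(D-m)/2} = w^{D-m}` still yields a function vanishing as `‖w‖ → ∞`. -/
theorem upper_half_coefficients_shifted
    (D m : ℕ) (hD : Even D) (hm : D / 2 < m) (hmD : m < D)
    (Q : ℕ → ℂ) (aU bU : ℕ → ℂ) (i : Fin 2) :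
    Tendsto (fun w : ℂ =>
        w ^ ((D - m : ℕ) : ℤ) *
          (w ^ (-((2 * D - m : ℕ) : ℤ)) *
            Matrix.mulVec
              (((List.range (D - m)).map (fun j => invStep Q (m + 1 + j) w)).prod)
              ![∑ i ∈ Finset.range (D / 2), aU i * (w^2) ^ (-(i:ℤ)),
                ∑ i ∈ Finset.range (D / 2), bU i * (w^2) ^ (-(i:ℤ))] i))
      (Filter.comap norm Filter.atTop) (nhds 0) := by
  set v : ℂ → Fin 2 → ℂ := fun w =>
    ![∑ i ∈ Finset.range (D / 2), aU i * (w^2) ^ (-(i:ℤ)),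
      ∑ i ∈ Finset.range (D / 2), bU i * (w^2) ^ (-(i:ℤ))] with hv
  have hvO : ∀ j, (fun w => v w j) =O[lF] (fun w => ‖w‖ ^ (0:ℤ)) := by
    intro j
    fin_cases j
    · simpa [hv] using sum_bigO aU (D/2)
    · simpa [hv] using sum_bigO bU (D/2)
  set ns : List ℕ := (List.range (D - m)).map (fun j => m + 1 + j) with hns
  have hmap : ∀ w : ℂ, ns.map (fun n => invStep Q n w)
      = (List.range (D - m)).map (fun j => invStep Q (m + 1 + j) w) := by
    intro w; rw [hns, List.map_map]; rfl
  have hlen : ns.length = D - m := by simp [hns]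
  have hentry := mulVec_prod_bigO Q ns v hvO i
  have hentry' : (fun w => ((((List.range (D - m)).map
      (fun j => invStep Q (m + 1 + j) w)).prod) *ᵥ (v w)) i)
      =O[lF] fun w => ‖w‖ ^ ((2 * (D - m) : ℕ) : ℤ) := by
    rw [hlen] at hentry
    refine hentry.congr' ?_ EventuallyEq.rfl
    filter_upwards with w
    rw [hmap w]
  have h1 : (fun w : ℂ => w ^ ((D - m : ℕ) : ℤ)) =O[lF]
      (fun w => ‖w‖ ^ ((D - m : ℕ) : ℤ)) := zpowBigO le_rfl
  have h2 : (fun w : ℂ => w ^ (-((2 * D - m : ℕ) : ℤ))) =O[lF]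
      (fun w => ‖w‖ ^ (-((2 * D - m : ℕ) : ℤ))) := zpowBigO le_rfl
  have htot := bigO_mul h1 (bigO_mul h2 hentry')
  have hexp : ((D - m : ℕ) : ℤ) + (-((2 * D - m : ℕ) : ℤ) + ((2 * (D - m) : ℕ) : ℤ))
      = (D : ℤ) - 2 * m := by
    have h1 : m ≤ D := hmD.le
    have h2 : m ≤ 2 * D := by omega
    push_cast [Nat.cast_sub h1, Nat.cast_sub h2]
    ring
  rw [hexp] at htot
  have hneg : (D : ℤ) - 2 * m < 0 := by
    obtain ⟨d, hd⟩ := hD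
    omega
  have hg : Tendsto (fun w : ℂ => ‖w‖ ^ ((D : ℤ) - 2 * m)) lF (nhds 0) :=
    (tendsto_zpow_atTop_zero hneg).comp lF_norm_tendsto
  exact htot.trans_tendsto hg
end

section
/- Let λ_1,…,λ_K be distinct points in the open upper half-plane, z_i(ε) = e^{-2iλ_i ε}, and B_ε(z) = ∏_{i=1}^K (z - z_i(ε))/(1 - z·conj(z_i(ε))). Then for each k, the limit as ε → 0⁺ of 2iε·B_ε'(z_k(ε)) equals (1/(λ_k - conj(λ_k)))·∏_{i≠k} (-(λ_k - λ_i)/(λ_k - conj(λ_i))). -/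
/-! Since `B_ε` vanishes at `z_k(ε)`, its derivative there is the derivative `1 / (1 - |z_k|²)`
of the `k`-th factor times the values of the other factors at `z_k`. Each numerator and
denominator involved is a difference of exponentials `e^{aε} - e^{bε} = (a - b) ε + o(ε)`
(using `z_k z̄_i = e^{-2i(λ_k - λ̄_i)ε}`), so after multiplying by `2iε` every ratio has a
finite limit, and `λ_k - λ̄_i ≠ 0` because both points lie in the upper half-plane. -/

open Filter Topology Complex ComplexConjugate

theorem HasDerivAt.fun_finsetProd_of_eq_zero {𝕜 ι 𝔸 : Type*} [NontriviallyNormedField 𝕜]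
    [DecidableEq ι] [NormedCommRing 𝔸] [NormedAlgebra 𝕜 𝔸] {u : Finset ι} {f : ι → 𝕜 → 𝔸}
    {f' : ι → 𝔸} {x : 𝕜} {k : ι} (hf : ∀ i ∈ u, HasDerivAt (f i) (f' i) x) (hk : k ∈ u)
    (hfk : f k x = 0) :
    HasDerivAt (∏ i ∈ u, f i ·) ((∏ i ∈ u.erase k, f i x) • f' k) x := by
  convert HasDerivAt.fun_finsetProd hf using 1
  rw [Finset.sum_eq_single_of_mem k hk fun i _ hik => ?_]
  rw [Finset.prod_eq_zero (Finset.mem_erase.mpr ⟨Ne.symm hik, hk⟩) hfk, zero_smul]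

namespace Complex

noncomputable def blaschkeFactor (w ζ : ℂ) : ℂ := (ζ - w) / (1 - ζ * conj w)

theorem hasDerivAt_blaschkeFactor {w ζ : ℂ} (h : 1 - ζ * conj w ≠ 0) :
    HasDerivAt (blaschkeFactor w) ((1 - w * conj w) / (1 - ζ * conj w) ^ 2) ζ := by
  have hnum : HasDerivAt (fun ζ : ℂ => ζ - w) 1 ζ := (hasDerivAt_id ζ).sub_const w
  have hden : HasDerivAt (fun ζ : ℂ => 1 - ζ * conj w) (-conj w) ζ := by
    simpa using ((hasDerivAt_id ζ).mul_const (conj w)).const_sub 1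
  exact (hnum.fun_div hden h).congr_deriv (by ring)

theorem deriv_prod_blaschkeFactor_of_mem {ι : Type*} [DecidableEq ι] {u : Finset ι}
    {w : ι → ℂ} {k : ι} (hk : k ∈ u) (hw : ∀ i ∈ u, 1 - w k * conj (w i) ≠ 0) :
    deriv (fun ζ => ∏ i ∈ u, blaschkeFactor (w i) ζ) (w k) =
      (1 - w k * conj (w k))⁻¹ * ∏ i ∈ u.erase k, blaschkeFactor (w i) (w k) := by
  have hderiv := HasDerivAt.fun_finsetProd_of_eq_zero
    (fun i hi => hasDerivAt_blaschkeFactor (hw i hi)) hk (by simp [blaschkeFactor])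
  rw [hderiv.deriv, smul_eq_mul, mul_comm, sq, div_mul_cancel_left₀ (hw k hk)]

theorem exp_ne_one_of_re_ne_zero {z : ℂ} (h : z.re ≠ 0) : exp z ≠ 1 := by
  intro h1
  have hnorm := congrArg norm h1
  rw [norm_exp, norm_one, Real.exp_eq_one_iff] at hnorm
  exact h hnorm

theorem exp_mul_conj_exp (l m : ℂ) (ε : ℝ) :
    exp (-2 * I * l * ε) * conj (exp (-2 * I * m * ε)) = exp (-2 * I * (l - conj m) * ε) := by
  rw [← exp_conj, ← exp_add]
  congr 1
  simp only [map_mul, map_neg, map_ofNat, conj_I, conj_ofReal]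
  ring

theorem one_sub_exp_mul_conj_exp_ne_zero {l m : ℂ} (h : 0 < (l - conj m).im) {ε : ℝ}
    (hε : 0 < ε) : 1 - exp (-2 * I * l * ε) * conj (exp (-2 * I * m * ε)) ≠ 0 := by
  rw [exp_mul_conj_exp, sub_ne_zero, ne_comm]
  refine exp_ne_one_of_re_ne_zero ?_
  have : (-2 * I * (l - conj m) * ε).re = 2 * (l - conj m).im * ε := by simp
  rw [this]
  positivity

theorem tendsto_exp_mul_sub_exp_mul_div (a b : ℂ) :
    Tendsto (fun ε : ℝ => (exp (a * ε) - exp (b * ε)) / ε) (𝓝[≠] 0) (𝓝 (a - b)) := by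
  have hexp (c : ℂ) : HasDerivAt (fun ε : ℝ => exp (c * ε)) c 0 := by
    simpa using (((hasDerivAt_id (0 : ℂ)).const_mul c).cexp).comp_ofReal
  refine (hasDerivAt_iff_tendsto_slope.mp ((hexp a).sub (hexp b))).congr fun ε => ?_
  simp [slope, div_eq_inv_mul, real_smul]

theorem tendsto_blaschkeFactor_exp {l m : ℂ} (h : l - conj m ≠ 0) :
    Tendsto (fun ε : ℝ => blaschkeFactor (exp (-2 * I * m * ε)) (exp (-2 * I * l * ε)))
      (𝓝[≠] 0) (𝓝 (-(l - m) / (l - conj m))) := by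
  have hc : (0 : ℂ) - -2 * I * (l - conj m) ≠ 0 := by simp [h]
  have hlim := (tendsto_exp_mul_sub_exp_mul_div (-2 * I * l) (-2 * I * m)).div
    (tendsto_exp_mul_sub_exp_mul_div 0 (-2 * I * (l - conj m))) hc
  convert hlim.congr' ?_ using 2
  · field_simp
    ring
  · filter_upwards [self_mem_nhdsWithin] with ε hε
    rw [Pi.div_apply, div_div_div_cancel_right₀ (ofReal_ne_zero.mpr hε), blaschkeFactor,
      exp_mul_conj_exp, zero_mul, exp_zero]

theorem tendsto_mul_inv_one_sub_exp_mul_conj_exp {l m : ℂ} (h : l - conj m ≠ 0) :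
    Tendsto (fun ε : ℝ => 2 * I * ε * (1 - exp (-2 * I * l * ε) * conj (exp (-2 * I * m * ε)))⁻¹)
      (𝓝[≠] 0) (𝓝 (1 / (l - conj m))) := by
  have hc : (0 : ℂ) - -2 * I * (l - conj m) ≠ 0 := by simp [h]
  have hlim := ((tendsto_exp_mul_sub_exp_mul_div 0 (-2 * I * (l - conj m))).inv₀ hc).const_mul
    (2 * I)
  convert hlim.congr' ?_ using 2
  · field_simp
    ring
  · filter_upwards [self_mem_nhdsWithin] with ε hε
    rw [exp_mul_conj_exp, zero_mul, exp_zero, inv_div]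
    ring

end Complex

open Filter in
theorem blaschke_deriv_limit_general (K : ℕ) (lam : Fin K → ℂ)
    (him : ∀ i, 0 < (lam i).im) (k : Fin K) :
    Tendsto (fun ε : ℝ =>
        2 * Complex.I * (ε : ℂ) *
          deriv (fun ζ : ℂ => ∏ i,
              (ζ - Complex.exp (-2 * Complex.I * lam i * ε)) /
                (1 - ζ * (starRingEnd ℂ) (Complex.exp (-2 * Complex.I * lam i * ε))))
            (Complex.exp (-2 * Complex.I * lam k * ε)))
      (nhdsWithin 0 (Set.Ioi 0))
      (nhds ((1 / (lam k - (starRingEnd ℂ) (lam k))) *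
        ∏ i ∈ Finset.univ.erase k,
          (-(lam k - lam i) / (lam k - (starRingEnd ℂ) (lam i))))) := by
  have hpos (i : Fin K) : 0 < (lam k - conj (lam i)).im := by
    simpa using add_pos (him k) (him i)
  have hne (i : Fin K) : lam k - conj (lam i) ≠ 0 := fun h0 => by simpa [h0] using hpos i
  have hlim := ((tendsto_mul_inv_one_sub_exp_mul_conj_exp (hne k)).mul
    (tendsto_finsetProd (Finset.univ.erase k) fun i _ => tendsto_blaschkeFactor_exp (hne i)))
  refine (hlim.mono_left (nhdsGT_le_nhdsNE 0)).congr' ?_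
  filter_upwards [self_mem_nhdsWithin] with ε hε
  rw [mul_assoc, ← deriv_prod_blaschkeFactor_of_mem (w := fun i => exp (-2 * I * lam i * ε))
    (Finset.mem_univ k) fun i _ => one_sub_exp_mul_conj_exp_ne_zero (hpos i) hε]
  rfl

open Filter in
theorem blaschke_deriv_limit (K : ℕ) (lam : Fin K → ℂ)
    (hinj : Function.Injective lam) (him : ∀ i, 0 < (lam i).im) (k : Fin K) :
    Tendsto (fun ε : ℝ =>
        2 * Complex.I * (ε : ℂ) *
          deriv (fun ζ : ℂ => ∏ i,
              (ζ - Complex.exp (-2 * Complex.I * lam i * ε)) /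
                (1 - ζ * (starRingEnd ℂ) (Complex.exp (-2 * Complex.I * lam i * ε))))
            (Complex.exp (-2 * Complex.I * lam k * ε)))
      (nhdsWithin 0 (Set.Ioi 0))
      (nhds ((1 / (lam k - (starRingEnd ℂ) (lam k))) *
        ∏ i ∈ Finset.univ.erase k,
          (-(lam k - lam i) / (lam k - (starRingEnd ℂ) (lam i))))) :=
  blaschke_deriv_limit_general K lam him k
end
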